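/- Let f, g : Fin n → EuclideanSpace ℝ (Fin n) be two linearly independent indecomposable families of vectors, each vector belonging to {±e_i : i} ∪ {±e_i ± e_j : i ≠ j}, each family containing at least one vector of the form ±e_i. If |⟪f k, f l⟫| = |⟪g k, g l⟫| for all k, l, then there exist a signed permutation W of the coordinates (a linear isometry x ↦ (δ_i x_{σ(i)}) with σ a permutation of Fin n and δ_i ∈ {−1, 1}) and a sign function ε : Fin n → {−1, 1} such that g k = ε k · W(f k) for all k. (Every family of simplices generating B_n has a unique embedding into B_n up to the action of the Weyl group of B_n.) -/

import Mathlib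

open scoped RealInnerProductSpace

/-- The graph whose vertices are the members of the family `f`, two of them being
adjacent iff they are not orthogonal; the family is indecomposable iff this graph
is connected. -/
def gramGraph {E : Type*} [NormedAddCommGroup E] [InnerProductSpace ℝ E]
    {ι : Type*} (f : ι → E) : SimpleGraph ι where
  Adj i j := i ≠ j ∧ ⟪f i, f j⟫ ≠ 0
  symm := by
    constructor
    intro i j h
    exact ⟨h.1.symm, by rw [real_inner_comm]; exact h.2⟩
  loopless := ⟨fun i h => h.1 rfl⟩

/-- `v` is a root of the root system `Bₙ`: `v = ±eᵢ` or `v = ±eᵢ ± eⱼ` with `i ≠ j`. -/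
def IsBRoot {m : ℕ} (v : EuclideanSpace ℝ (Fin m)) : Prop :=
  (∃ i, v = EuclideanSpace.single i 1 ∨ v = -EuclideanSpace.single i 1) ∨
  (∃ i j, i ≠ j ∧
    (v = EuclideanSpace.single i 1 + EuclideanSpace.single j 1 ∨
     v = EuclideanSpace.single i 1 - EuclideanSpace.single j 1 ∨
     v = -(EuclideanSpace.single i 1 + EuclideanSpace.single j 1)))

/-!
Both families are ℤ-bases of `ℤⁿ`: starting from the short root and walking along the connected
Gram graph, every `eᵢ` lies in their ℤ-span, because a root `±eᵢ ± eⱼ` together with one of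
`eᵢ, eⱼ` yields the other. Hence an integer combination of the family with even coordinates has
even coefficients. This forces two distinct roots to share at most one coordinate, so adjacent
roots have inner product `±1`, and it forces the product of the inner products along every closed
walk of the Gram graph to be `1`: regrouping the product by the positions where the shared
coordinate changes, every root occurs there an even number of times. So each Gram matrix becomes
entrywise nonnegative after changing the signs of some vectors, and after such sign changes `g`
has the Gram matrix of `f`. The linear map `fₖ ↦ εₖ gₖ` is then an isometry mapping `ℤⁿ` into
`ℤⁿ`, i.e. a signed permutation of coordinates.
-/

open scoped Finset

theorem EuclideanSpace.real_inner_eq_sum {ι : Type*} [Fintype ι] (x y : EuclideanSpace ℝ ι) :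
    ⟪x, y⟫ = ∑ i, x i * y i := by
  simp [PiLp.inner_apply, mul_comm]

theorem EuclideanSpace.exists_apply_ne_zero_of_inner_ne_zero {ι : Type*} [Fintype ι]
    {x y : EuclideanSpace ℝ ι} (h : ⟪x, y⟫ ≠ 0) : ∃ i, x i ≠ 0 ∧ y i ≠ 0 := by
  rw [EuclideanSpace.real_inner_eq_sum] at h
  obtain ⟨i, -, hi⟩ := Finset.exists_ne_zero_of_sum_ne_zero h
  exact ⟨i, left_ne_zero_of_mul hi, right_ne_zero_of_mul hi⟩

def integerLattice (m : ℕ) : Submodule ℤ (EuclideanSpace ℝ (Fin m)) :=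
  Submodule.span ℤ (Set.range (EuclideanSpace.basisFun (Fin m) ℝ).toBasis)

theorem mem_integerLattice {m : ℕ} {x : EuclideanSpace ℝ (Fin m)} :
    x ∈ integerLattice m ↔ ∀ i, x i ∈ Set.range ((↑) : ℤ → ℝ) := by
  rw [integerLattice, Module.Basis.mem_span_iff_repr_mem]
  simp

theorem single_mem_integerLattice {m : ℕ} (i : Fin m) :
    EuclideanSpace.single i (1 : ℝ) ∈ integerLattice m := by
  rw [mem_integerLattice]
  intro j
  by_cases h : j = i <;> simp [h]

noncomputable def supportProd {m : ℕ} (v : EuclideanSpace ℝ (Fin m)) : ℝ :=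
  ∏ l ∈ Finset.univ.filter (fun l => v l ≠ 0), v l

namespace IsBRoot

variable {m : ℕ} {v : EuclideanSpace ℝ (Fin m)}

theorem apply_eq_zero_or_eq_one_or_eq_neg_one (hv : IsBRoot v) (i : Fin m) :
    v i = 0 ∨ v i = 1 ∨ v i = -1 := by
  rcases hv with ⟨j, rfl | rfl⟩ | ⟨j, k, hjk, rfl | rfl | rfl⟩ <;>
    simp only [PiLp.add_apply, PiLp.sub_apply, PiLp.neg_apply, PiLp.single_apply] <;>
    split_ifs <;> simp_all

theorem apply_ne_zero_iff (hv : IsBRoot v) {i : Fin m} : v i ≠ 0 ↔ v i = 1 ∨ v i = -1 := by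
  rcases hv.apply_eq_zero_or_eq_one_or_eq_neg_one i with h | h | h <;> simp [h]

theorem apply_mul_self (hv : IsBRoot v) {i : Fin m} (hi : v i ≠ 0) : v i * v i = 1 := by
  rcases hv.apply_ne_zero_iff.mp hi with h | h <;> simp [h]

theorem apply_ne_zero_iff_of_ne (hv : IsBRoot v) {i j : Fin m} (hij : i ≠ j) (hi : v i ≠ 0)
    (hj : v j ≠ 0) {l : Fin m} : v l ≠ 0 ↔ l = i ∨ l = j := by
  refine ⟨fun hl => ?_, by rintro (rfl | rfl) <;> assumption⟩
  by_contra! h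
  rcases hv with ⟨p, rfl | rfl⟩ | ⟨p, q, hpq, rfl | rfl | rfl⟩ <;>
    simp only [PiLp.add_apply, PiLp.sub_apply, PiLp.neg_apply,
      PiLp.single_apply] at hi hj hl <;>
    split_ifs at hi hj hl <;> simp_all

theorem eq_smul_single_add_smul_single (hv : IsBRoot v) {i j : Fin m} (hij : i ≠ j)
    (hi : v i ≠ 0) (hj : v j ≠ 0) :
    v = v i • EuclideanSpace.single i 1 + v j • EuclideanSpace.single j 1 := by
  ext l
  by_cases hl : l = i ∨ l = j
  · rcases hl with rfl | rfl <;> simp [hij, hij.symm]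
  · have : v l = 0 := not_not.mp (mt (hv.apply_ne_zero_iff_of_ne hij hi hj).mp hl)
    rw [not_or] at hl
    simp [this, hl.1, hl.2]

theorem mem_integerLattice (hv : IsBRoot v) : v ∈ integerLattice m :=
  _root_.mem_integerLattice.mpr fun i => by
    rcases hv.apply_eq_zero_or_eq_one_or_eq_neg_one i with h | h | h
    exacts [⟨0, by simp [h]⟩, ⟨1, by simp [h]⟩, ⟨-1, by simp [h]⟩]

theorem apply_smul_mem (hv : IsBRoot v) (i : Fin m)
    {Λ : Submodule ℤ (EuclideanSpace ℝ (Fin m))} {x : EuclideanSpace ℝ (Fin m)} (hx : x ∈ Λ) :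
    v i • x ∈ Λ := by
  rcases hv.apply_eq_zero_or_eq_one_or_eq_neg_one i with h | h | h <;>
    simp [h, hx, Λ.neg_mem hx]

theorem single_mem_of_mem (hv : IsBRoot v) {Λ : Submodule ℤ (EuclideanSpace ℝ (Fin m))}
    (hvΛ : v ∈ Λ) {p q : Fin m} (hp : v p ≠ 0) (hq : v q ≠ 0)
    (hpΛ : EuclideanSpace.single p (1 : ℝ) ∈ Λ) : EuclideanSpace.single q (1 : ℝ) ∈ Λ := by
  rcases eq_or_ne q p with rfl | hqp
  · exact hpΛ
  have hrest : v - v p • EuclideanSpace.single p 1 = v q • EuclideanSpace.single q 1 :=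
    sub_eq_iff_eq_add'.mpr (hv.eq_smul_single_add_smul_single hqp.symm hp hq)
  have : EuclideanSpace.single q (1 : ℝ) = v q • (v - v p • EuclideanSpace.single p 1) := by
    rw [hrest, smul_smul, hv.apply_mul_self hq, one_smul]
  rw [this]
  exact hv.apply_smul_mem q (Λ.sub_mem hvΛ (hv.apply_smul_mem p hpΛ))

theorem supportProd_eq (hv : IsBRoot v) {i j : Fin m} (hij : i ≠ j) (hi : v i ≠ 0)
    (hj : v j ≠ 0) : supportProd v = v i * v j := by
  have hsupp : Finset.univ.filter (fun l => v l ≠ 0) = {i, j} := by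
    ext l
    simp [hv.apply_ne_zero_iff_of_ne hij hi hj]
  rw [supportProd, hsupp, Finset.prod_pair hij]

theorem supportProd_mul_self (hv : IsBRoot v) : supportProd v * supportProd v = 1 := by
  rw [supportProd, ← Finset.prod_mul_distrib]
  exact Finset.prod_eq_one fun l hl => hv.apply_mul_self (Finset.mem_filter.mp hl).2

theorem exists_add_apply_eq_two_mul {w : EuclideanSpace ℝ (Fin m)} (hv : IsBRoot v)
    (hw : IsBRoot w) {i : Fin m} (hvi : v i ≠ 0) (hwi : w i ≠ 0) : ∃ z : ℤ, v i + w i = 2 * z := by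
  rcases hv.apply_ne_zero_iff.mp hvi with h | h <;> rcases hw.apply_ne_zero_iff.mp hwi with h' | h'
  exacts [⟨1, by rw [h, h']; norm_num⟩, ⟨0, by rw [h, h']; norm_num⟩,
    ⟨0, by rw [h, h']; norm_num⟩, ⟨-1, by rw [h, h']; norm_num⟩]

end IsBRoot

theorem Finset.card_filter_comp_and_not_eq {α : Type*} [Fintype α] (e : α ≃ α) (p : α → Prop)
    [DecidablePred p] : #{t | p (e t) ∧ ¬ p t} = #{t | p t ∧ ¬ p (e t)} := by
  have hcomp : #{t | p (e t)} = #{t | p t} := by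
    simp only [Finset.card_filter]
    exact e.sum_comp fun t => if p t then 1 else 0
  have h₁ := Finset.card_filter_add_card_filter_not (s := {t | p (e t)}) p
  have h₂ := Finset.card_filter_add_card_filter_not (s := {t | p t}) (p ∘ e)
  simp only [Finset.filter_filter, Function.comp] at h₁ h₂
  have hcomm : #{t | p t ∧ p (e t)} = #{t | p (e t) ∧ p t} :=
    congrArg Finset.card (Finset.filter_congr fun _ _ => and_comm)
  omega

theorem Finset.sum_eq_card_ne_zero_sub_two_mul_card {α : Type*} (s : Finset α) {h : α → ℝ}
    (hs : ∀ t ∈ s, h t = 0 ∨ h t = 1 ∨ h t = -1) :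
    ∑ t ∈ s, h t = #{t ∈ s | h t ≠ 0} - 2 * #{t ∈ s | h t = -1} := by
  rw [Finset.card_filter, Finset.card_filter]
  push_cast
  rw [Finset.mul_sum, ← Finset.sum_sub_distrib]
  refine Finset.sum_congr rfl fun t ht => ?_
  rcases hs t ht with h | h | h <;> norm_num [h]

namespace SimpleGraph

variable {V M : Type*} [CommMonoid M] {G : SimpleGraph V}

def Walk.weightProd (c : V → V → M) {u v : V} (p : G.Walk u v) : M :=
  (p.darts.map fun d => c d.fst d.snd).prod

namespace Walk

variable (c : V → V → M)

@[simp]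
theorem weightProd_nil {u : V} : (nil : G.Walk u u).weightProd c = 1 := rfl

@[simp]
theorem weightProd_cons {u v w : V} (h : G.Adj u v) (p : G.Walk v w) :
    (cons h p).weightProd c = c u v * p.weightProd c := by
  simp [weightProd]

@[simp]
theorem weightProd_append {u v w : V} (p : G.Walk u v) (q : G.Walk v w) :
    (p.append q).weightProd c = p.weightProd c * q.weightProd c := by
  simp [weightProd]

theorem weightProd_reverse (hc : ∀ a b, c a b = c b a) {u v : V} (p : G.Walk u v) :
    p.reverse.weightProd c = p.weightProd c := by
  simp [weightProd, Function.comp_def, hc _ _]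

theorem weightProd_eq_prod_range {u v : V} (p : G.Walk u v) :
    p.weightProd c = ∏ t ∈ Finset.range p.length, c (p.getVert t) (p.getVert (t + 1)) := by
  induction p with
  | nil => simp
  | cons h p ih => simp [ih, Finset.prod_range_succ', mul_comm]

end Walk

theorem Connected.exists_sign_mul_eq_of_weightProd_eq_one (hG : G.Connected) (c : V → V → ℝ)
    (hsymm : ∀ a b, c a b = c b a) (hpm : ∀ a b, G.Adj a b → c a b = 1 ∨ c a b = -1)
    (hcycle : ∀ v (w : G.Walk v v), w.weightProd c = 1) :
    ∃ η : V → ℝ, (∀ k, η k = 1 ∨ η k = -1) ∧ ∀ a b, G.Adj a b → η a * η b = c a b := by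
  have hwalk {u v} (p : G.Walk u v) : p.weightProd c = 1 ∨ p.weightProd c = -1 := by
    induction p with
    | nil => simp
    | cons h p ih =>
      rcases hpm _ _ h with h' | h' <;> rcases ih with ih | ih <;> simp [h', ih]
  obtain ⟨k₀⟩ := hG.nonempty
  let w k := (hG.preconnected k₀ k).some
  refine ⟨fun k => (w k).weightProd c, fun k => hwalk _, fun a b hab => ?_⟩
  have h := hcycle _ ((w a).append (.cons hab (w b).reverse))
  rw [Walk.weightProd_append, Walk.weightProd_cons, Walk.weightProd_reverse c hsymm] at h
  show (w a).weightProd c * (w b).weightProd c = c a b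
  rcases hwalk (w a) with ha | ha <;> rcases hwalk (w b) with hb | hb <;>
    rw [ha, hb] at h ⊢ <;> linarith

end SimpleGraph

section Lattice

variable {ι : Type*} {m : ℕ} {f : ι → EuclideanSpace ℝ (Fin m)}

theorem integerLattice_le_span_of_connected (hf : ∀ k, IsBRoot (f k))
    (hconn : (gramGraph f).Connected)
    (hshort : ∃ k i, f k = EuclideanSpace.single i 1 ∨ f k = -EuclideanSpace.single i 1)
    (htop : Submodule.span ℝ (Set.range f) = ⊤) :
    integerLattice m ≤ Submodule.span ℤ (Set.range f) := by
  set Λ := Submodule.span ℤ (Set.range f)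
  have hfΛ k : f k ∈ Λ := Submodule.subset_span ⟨k, rfl⟩
  let P k := ∀ i, f k i ≠ 0 → EuclideanSpace.single i (1 : ℝ) ∈ Λ
  have hP {k p} (hp : f k p ≠ 0) (hpΛ : EuclideanSpace.single p (1 : ℝ) ∈ Λ) : P k :=
    fun _ hq => (hf k).single_mem_of_mem (hfΛ k) hp hq hpΛ
  obtain ⟨k₀, i₀, hk₀⟩ := hshort
  have hPk₀ : P k₀ := by
    rcases hk₀ with h | h
    · exact hP (p := i₀) (by simp [h]) (h ▸ hfΛ k₀)
    · exact hP (p := i₀) (by simp [h]) (by simpa [h] using Λ.neg_mem (hfΛ k₀))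
  have hPall k : P k := by
    induction (SimpleGraph.reachable_iff_reflTransGen _ _).mp (hconn.preconnected k₀ k) with
    | refl => exact hPk₀
    | tail _ hadj ih =>
      obtain ⟨p, hap, hbp⟩ := EuclideanSpace.exists_apply_ne_zero_of_inner_ne_zero hadj.2
      exact hP hbp (ih p hap)
  rw [integerLattice, Submodule.span_le]
  rintro _ ⟨i, rfl⟩
  obtain ⟨k, hk⟩ : ∃ k, f k i ≠ 0 := by
    by_contra! h
    have hker : Submodule.span ℝ (Set.range f) ≤
        LinearMap.ker (EuclideanSpace.proj (𝕜 := ℝ) i).toLinearMap :=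
      Submodule.span_le.mpr (by rintro _ ⟨k, rfl⟩; simp [h k])
    rw [htop] at hker
    simpa using hker (Submodule.mem_top (x := EuclideanSpace.single i (1 : ℝ)))
  simpa using hPall k i hk

theorem two_dvd_of_sum_zsmul [Fintype ι] (hli : LinearIndependent ℝ f)
    (hlat : integerLattice m ≤ Submodule.span ℤ (Set.range f)) {c : ι → ℤ}
    (hc : ∀ i, ∃ z : ℤ, (∑ a, c a • f a) i = 2 * z) (a : ι) : 2 ∣ c a := by
  choose z hz using hc
  obtain ⟨d, hd⟩ := (Submodule.mem_span_range_iff_exists_fun ℤ).mp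
    (hlat (mem_integerLattice.mpr fun i => ⟨z i, rfl⟩ : WithLp.toLp 2 (fun i => (z i : ℝ)) ∈ _))
  have hzero : ∑ a, (c a - 2 * d a) • f a = 0 := by
    simp only [sub_smul, Finset.sum_sub_distrib, mul_smul, ← Finset.smul_sum, hd]
    ext i
    simp [hz]
  have := Fintype.linearIndependent_iff.mp (hli.restrict_scalars' ℤ) _ hzero a
  exact ⟨d a, by linarith⟩

end Lattice

section GramSigns

variable {ι : Type*} [Fintype ι] {m : ℕ} {f : ι → EuclideanSpace ℝ (Fin m)}
  (hf : ∀ k, IsBRoot (f k)) (hli : LinearIndependent ℝ f)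
  (hlat : integerLattice m ≤ Submodule.span ℤ (Set.range f))
include hf hli hlat

theorem eq_of_apply_ne_zero [DecidableEq ι] {a b : ι} (hab : a ≠ b) {i j : Fin m}
    (hai : f a i ≠ 0) (hbi : f b i ≠ 0) (haj : f a j ≠ 0) (hbj : f b j ≠ 0) : i = j := by
  by_contra hij
  have hsum : ∑ x, (Pi.single a 1 + Pi.single b 1 : ι → ℤ) x • f x = f a + f b := by
    simp [add_smul, Finset.sum_add_distrib, Pi.single_apply]
  have heven l : ∃ z : ℤ, (∑ x, (Pi.single a 1 + Pi.single b 1 : ι → ℤ) x • f x) l = 2 * z := by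
    rw [hsum, PiLp.add_apply]
    by_cases hl : l = i ∨ l = j
    · rcases hl with rfl | rfl
      exacts [(hf a).exists_add_apply_eq_two_mul (hf b) hai hbi,
        (hf a).exists_add_apply_eq_two_mul (hf b) haj hbj]
    · have ha := mt ((hf a).apply_ne_zero_iff_of_ne hij hai haj).mp hl
      have hb := mt ((hf b).apply_ne_zero_iff_of_ne hij hbi hbj).mp hl
      exact ⟨0, by simp [not_not.mp ha, not_not.mp hb]⟩
  have := two_dvd_of_sum_zsmul hli hlat heven a
  simp [hab.symm] at this

theorem inner_eq_apply_mul_apply {a b : ι} (hab : a ≠ b) {i : Fin m} (hai : f a i ≠ 0)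
    (hbi : f b i ≠ 0) : ⟪f a, f b⟫ = f a i * f b i := by
  classical
  rw [EuclideanSpace.real_inner_eq_sum]
  refine Finset.sum_eq_single i (fun j _ hji => ?_) (by simp)
  by_contra h
  exact hji (eq_of_apply_ne_zero hf hli hlat hab (left_ne_zero_of_mul h)
    (right_ne_zero_of_mul h) hai hbi)

theorem inner_eq_one_or_eq_neg_one_of_adj {a b : ι} (hab : (gramGraph f).Adj a b) :
    ⟪f a, f b⟫ = 1 ∨ ⟪f a, f b⟫ = -1 := by
  obtain ⟨p, hap, hbp⟩ := EuclideanSpace.exists_apply_ne_zero_of_inner_ne_zero hab.2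
  rw [inner_eq_apply_mul_apply hf hli hlat hab.1 hap hbp]
  rcases (hf a).apply_ne_zero_iff.mp hap with h | h <;>
    rcases (hf b).apply_ne_zero_iff.mp hbp with h' | h' <;> simp [h, h']

theorem two_dvd_card_coord_changes [DecidableEq ι] {r : ℕ} (K : Fin (r + 1) → ι)
    (V : Fin (r + 1) → Fin m)
    (hsupp : ∀ t, V (t - 1) ≠ V t → ∀ l, f (K t) l ≠ 0 ↔ l = V (t - 1) ∨ l = V t) (a : ι) :
    2 ∣ #{t ∈ ({t | V (t - 1) ≠ V t} : Finset _) | K t = a} := by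
  set J : Finset (Fin (r + 1)) := {t | V (t - 1) ≠ V t}
  have hJ {t} (ht : t ∈ J) : V (t - 1) ≠ V t := (Finset.mem_filter.mp ht).2
  have heven i : ∃ z : ℤ, (∑ a, (#{t ∈ J | K t = a} : ℤ) • f a) i = 2 * z := by
    have hsum : ∑ a, (#{t ∈ J | K t = a} : ℤ) • f a = ∑ t ∈ J, f (K t) := by
      rw [← Finset.sum_fiberwise J K]
      refine Finset.sum_congr rfl fun a _ => ?_
      rw [Finset.sum_congr rfl fun t ht => by rw [(Finset.mem_filter.mp ht).2],
        Finset.sum_const, natCast_zsmul]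
    have hcard : #{t ∈ J | f (K t) i ≠ 0} = #{t ∈ J | V (t - 1) = i} + #{t ∈ J | V t = i} := by
      rw [← Finset.card_union_of_disjoint, ← Finset.filter_or]
      · exact congrArg Finset.card <| Finset.filter_congr fun t ht => by
          rw [hsupp t (hJ ht), eq_comm, @eq_comm _ i]
      · exact Finset.disjoint_filter.mpr fun t ht h₁ h₂ => hJ ht (h₁.trans h₂.symm)
    -- going around the cycle, `V` arrives at `i` as often as it leaves `i`
    have hturn : #{t ∈ J | V (t - 1) = i} = #{t ∈ J | V t = i} := by
      have := Finset.card_filter_comp_and_not_eq (Equiv.subRight 1) (fun t => V t = i)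
      simp only [Equiv.subRight_apply] at this
      convert this using 2 <;> ext t <;> simp only [J, Finset.filter_filter, Finset.mem_filter,
        Finset.mem_univ, true_and] <;> grind
    refine ⟨#{t ∈ J | V t = i} - #{t ∈ J | f (K t) i = -1}, ?_⟩
    rw [hsum, WithLp.ofLp_sum, Finset.sum_apply, Finset.sum_eq_card_ne_zero_sub_two_mul_card _
      fun t _ => (hf (K t)).apply_eq_zero_or_eq_one_or_eq_neg_one i, hcard, hturn]
    push_cast
    ring
  exact_mod_cast two_dvd_of_sum_zsmul hli hlat heven a

theorem prod_inner_eq_one_of_cyclic {r : ℕ} (K : Fin (r + 1) → ι)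
    (hK : ∀ t, (gramGraph f).Adj (K t) (K (t + 1))) : ∏ t, ⟪f (K t), f (K (t + 1))⟫ = 1 := by
  classical
  choose V hV using fun t => EuclideanSpace.exists_apply_ne_zero_of_inner_ne_zero (hK t).2
  have hV' t : f (K t) (V (t - 1)) ≠ 0 := by simpa using (hV (t - 1)).2
  have hsupp t (ht : V (t - 1) ≠ V t) l : f (K t) l ≠ 0 ↔ l = V (t - 1) ∨ l = V t :=
    (hf (K t)).apply_ne_zero_iff_of_ne ht (hV' t) (hV t).1
  set J : Finset (Fin (r + 1)) := {t | V (t - 1) ≠ V t}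
  calc ∏ t, ⟪f (K t), f (K (t + 1))⟫ = ∏ t, f (K t) (V t) * f (K (t + 1)) (V t) :=
        Finset.prod_congr rfl fun t _ =>
          inner_eq_apply_mul_apply hf hli hlat (hK t).1 (hV t).1 (hV t).2
    _ = ∏ t, f (K t) (V (t - 1)) * f (K t) (V t) := by
        rw [Finset.prod_mul_distrib, Finset.prod_mul_distrib, mul_comm]
        congr 1
        exact ((Equiv.subRight 1).prod_comp _).symm.trans (by simp)
    _ = ∏ t ∈ J, supportProd (f (K t)) := by
        rw [Finset.prod_filter]
        refine Finset.prod_congr rfl fun t _ => ?_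
        split_ifs with h
        · exact ((hf (K t)).supportProd_eq h (hV' t) (hV t).1).symm
        · rw [not_not.mp h, (hf (K t)).apply_mul_self (hV t).1]
    _ = ∏ a ∈ J.image K, supportProd (f a) ^ #{t ∈ J | K t = a} :=
        Finset.prod_comp (fun a => supportProd (f a)) K
    _ = 1 := Finset.prod_eq_one fun a _ => by
        obtain ⟨k, hk⟩ := two_dvd_card_coord_changes hf hli hlat K V hsupp a
        rw [hk, pow_mul, sq, (hf a).supportProd_mul_self, one_pow]

theorem weightProd_inner_eq_one {v : ι} (w : (gramGraph f).Walk v v) :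
    w.weightProd (fun a b => ⟪f a, f b⟫) = 1 := by
  rw [SimpleGraph.Walk.weightProd_eq_prod_range]
  rcases hlen : w.length with _ | r
  · simp
  have hnext (t : Fin (r + 1)) : w.getVert (t + 1) = w.getVert ((t + 1 : Fin (r + 1)) : ℕ) := by
    rw [Fin.val_add_one]
    split_ifs with h
    · simp [h, ← hlen]
    · rfl
  rw [← Fin.prod_univ_eq_prod_range (fun t => ⟪f (w.getVert t), f (w.getVert (t + 1))⟫)]
  simp_rw [hnext]
  exact prod_inner_eq_one_of_cyclic hf hli hlat (fun t => w.getVert t) fun t =>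
    hnext t ▸ w.adj_getVert_succ (by omega)

theorem exists_sign_mul_inner_eq_abs (hconn : (gramGraph f).Connected) :
    ∃ η : ι → ℝ, (∀ k, η k = 1 ∨ η k = -1) ∧ ∀ k l, η k * η l * ⟪f k, f l⟫ = |⟪f k, f l⟫| := by
  obtain ⟨η, hη, hadj⟩ := hconn.exists_sign_mul_eq_of_weightProd_eq_one (fun a b => ⟪f a, f b⟫)
    (fun _ _ => real_inner_comm _ _)
    (fun _ _ => inner_eq_one_or_eq_neg_one_of_adj hf hli hlat)
    (fun _ => weightProd_inner_eq_one hf hli hlat)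
  refine ⟨η, hη, fun k l => ?_⟩
  by_cases hkl : k = l
  · subst hkl
    rw [abs_of_nonneg real_inner_self_nonneg]
    rcases hη k with h | h <;> simp [h]
  by_cases h0 : ⟪f k, f l⟫ = 0
  · simp [h0]
  rw [hadj k l ⟨hkl, h0⟩]
  rcases inner_eq_one_or_eq_neg_one_of_adj hf hli hlat ⟨hkl, h0⟩ with h | h <;> simp [h]

end GramSigns

theorem exists_linearMap_inner_map_map {ι E F : Type*} [NormedAddCommGroup E]
    [InnerProductSpace ℝ E] [NormedAddCommGroup F] [InnerProductSpace ℝ F] {f : ι → E}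
    {g : ι → F} (hli : LinearIndependent ℝ f) (htop : Submodule.span ℝ (Set.range f) = ⊤)
    (h : ∀ k l, ⟪g k, g l⟫ = ⟪f k, f l⟫) :
    ∃ T : E →ₗ[ℝ] F, (∀ k, T (f k) = g k) ∧ ∀ x y, ⟪T x, T y⟫ = ⟪x, y⟫ := by
  let b := Module.Basis.mk hli htop.ge
  have hTf k : b.constr ℝ g (f k) = g k := by
    simpa [b] using b.constr_basis ℝ g k
  refine ⟨b.constr ℝ g, hTf, fun x y => ?_⟩
  have hB : (innerₗ F).compl₁₂ (b.constr ℝ g) (b.constr ℝ g) = innerₗ E :=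
    LinearMap.ext_basis b b fun k l => by simp [b, hTf, h]
  exact LinearMap.congr_fun₂ hB x y

theorem EuclideanSpace.exists_eq_smul_single_of_mem_integerLattice {n : ℕ}
    {v : EuclideanSpace ℝ (Fin n)} (hv : v ∈ integerLattice n) (h1 : ⟪v, v⟫ = 1) :
    ∃ j, ∃ s : ℝ, (s = 1 ∨ s = -1) ∧ v = s • EuclideanSpace.single j 1 := by
  choose z hz using mem_integerLattice.mp hv
  have hsum : ∑ i, z i * z i = 1 := by
    rw [EuclideanSpace.real_inner_eq_sum] at h1
    exact_mod_cast (by simpa [← hz] using h1 : ∑ i, (z i : ℝ) * z i = 1)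
  have hsq {i} (hi : z i ≠ 0) : 1 ≤ z i * z i := by
    have := mul_self_pos.mpr hi
    linarith
  obtain ⟨j, hj⟩ : ∃ j, z j ≠ 0 := by
    by_contra! h
    simp [h] at hsum
  have hzero {i} (hij : i ≠ j) : z i = 0 := by
    by_contra hi
    have := Finset.sum_le_sum_of_subset_of_nonneg (Finset.subset_univ {i, j})
      fun l _ _ => mul_self_nonneg (z l)
    rw [Finset.sum_pair hij, hsum] at this
    linarith [hsq hi, hsq hj]
  have hzj : z j * z j = 1 := by
    rwa [Finset.sum_eq_single j (fun i _ hij => by rw [hzero hij, mul_zero]) (by simp)] at hsum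
  refine ⟨j, z j, ?_, ?_⟩
  · rcases Int.eq_one_or_neg_one_of_mul_eq_one hzj with h | h <;> simp [h]
  · ext i
    by_cases hij : i = j
    · simp [hij, hz]
    · simp [hij, ← hz, hzero hij]

theorem exists_signed_perm_of_inner_map_map {n : ℕ}
    (T : EuclideanSpace ℝ (Fin n) →ₗ[ℝ] EuclideanSpace ℝ (Fin n))
    (hT : ∀ x y, ⟪T x, T y⟫ = ⟪x, y⟫)
    (hZ : ∀ j, T (EuclideanSpace.single j 1) ∈ integerLattice n) :
    ∃ (σ : Equiv.Perm (Fin n)) (δ : Fin n → ℝ),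
      (∀ i, δ i = 1 ∨ δ i = -1) ∧ ∀ x i, T x i = δ i * x (σ i) := by
  choose ρ s hs hρ using fun j =>
    EuclideanSpace.exists_eq_smul_single_of_mem_integerLattice (hZ j) (by rw [hT]; simp)
  have hinj : Function.Injective ρ := by
    intro j j' h
    by_contra hne
    have := hT (EuclideanSpace.single j 1) (EuclideanSpace.single j' 1)
    rw [hρ j, hρ j', h] at this
    rcases hs j with h₁ | h₁ <;> rcases hs j' with h₂ | h₂ <;>
      simp [h₁, h₂, hne, EuclideanSpace.inner_single_left] at this
  let σ := (Equiv.ofBijective ρ hinj.bijective_of_finite).symm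
  have hρσ i : ρ (σ i) = i := (Equiv.ofBijective ρ _).apply_symm_apply i
  refine ⟨σ, fun i => s (σ i), fun i => hs _, fun x i => ?_⟩
  conv_lhs => rw [← (EuclideanSpace.basisFun (Fin n) ℝ).sum_repr x]
  simp only [map_sum, map_smul, EuclideanSpace.basisFun_apply, EuclideanSpace.basisFun_repr, hρ,
    WithLp.ofLp_sum, Finset.sum_apply]
  rw [Finset.sum_eq_single (σ i)]
  · simp [hρσ, mul_comm]
  · intro j _ hj
    have : i ≠ ρ j := by rintro rfl; exact hj (by simp [σ])
    simp [this]
  · simp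

theorem exists_signed_perm_of_inner_eq {ι : Type*} {n : ℕ} {f g : ι → EuclideanSpace ℝ (Fin n)}
    (hli : LinearIndependent ℝ f) (hlat : integerLattice n ≤ Submodule.span ℤ (Set.range f))
    (hg : ∀ k, g k ∈ integerLattice n) (h : ∀ k l, ⟪g k, g l⟫ = ⟪f k, f l⟫) :
    ∃ (σ : Equiv.Perm (Fin n)) (δ : Fin n → ℝ),
      (∀ i, δ i = 1 ∨ δ i = -1) ∧ ∀ k i, g k i = δ i * f k (σ i) := by
  have htop : Submodule.span ℝ (Set.range f) = ⊤ := by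
    rw [eq_top_iff, ← (EuclideanSpace.basisFun (Fin n) ℝ).toBasis.span_eq, Submodule.span_le]
    rintro _ ⟨i, rfl⟩
    exact Submodule.span_le_restrictScalars ℤ ℝ _ (hlat (Submodule.subset_span ⟨i, rfl⟩))
  obtain ⟨T, hTf, hT⟩ := exists_linearMap_inner_map_map hli htop h
  have hZ j : T (EuclideanSpace.single j 1) ∈ integerLattice n := by
    have : Submodule.span ℤ (Set.range f) ≤ (integerLattice n).comap (T.restrictScalars ℤ) :=
      Submodule.span_le.mpr (by rintro _ ⟨k, rfl⟩; simpa [hTf] using hg k)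
    exact this (hlat (single_mem_integerLattice j))
  obtain ⟨σ, δ, hδ, hσ⟩ := exists_signed_perm_of_inner_map_map T hT hZ
  exact ⟨σ, δ, hδ, fun k i => by rw [← hTf, hσ]⟩

/-- Every family of simplices generating `Bₙ` has a unique embedding into `Bₙ` up to
the action of the Weyl group of `Bₙ` (the signed coordinate permutations
`x ↦ (δᵢ x_{σ(i)})`): two embeddings with the same unsigned Gram matrix differ by a
signed coordinate permutation and signs of the individual vectors. -/
theorem Bn_embedding_unique {n : ℕ}
    (f g : Fin n → EuclideanSpace ℝ (Fin n))
    (hf_li : LinearIndependent ℝ f) (hg_li : LinearIndependent ℝ g)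
    (hf_root : ∀ k, IsBRoot (f k)) (hg_root : ∀ k, IsBRoot (g k))
    (hf_indec : (gramGraph f).Connected) (hg_indec : (gramGraph g).Connected)
    (hf_short : ∃ k i, f k = EuclideanSpace.single i 1 ∨
      f k = -EuclideanSpace.single i 1)
    (hg_short : ∃ k i, g k = EuclideanSpace.single i 1 ∨
      g k = -EuclideanSpace.single i 1)
    (habs : ∀ k l, |⟪f k, f l⟫| = |⟪g k, g l⟫|) :
    ∃ (σ : Equiv.Perm (Fin n)) (δ : Fin n → ℝ) (ε : Fin n → ℝ),
      (∀ i, δ i = 1 ∨ δ i = -1) ∧ (∀ k, ε k = 1 ∨ ε k = -1) ∧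
      ∀ k i, g k i = ε k * (δ i * f k (σ i)) := by
  have htop {h : Fin n → EuclideanSpace ℝ (Fin n)} (hh : LinearIndependent ℝ h) :
      Submodule.span ℝ (Set.range h) = ⊤ :=
    hh.span_eq_top_of_card_eq_finrank' (by simp)
  have hlat_f := integerLattice_le_span_of_connected hf_root hf_indec hf_short (htop hf_li)
  have hlat_g := integerLattice_le_span_of_connected hg_root hg_indec hg_short (htop hg_li)
  obtain ⟨ηf, hηf, hf⟩ := exists_sign_mul_inner_eq_abs hf_root hf_li hlat_f hf_indec
  obtain ⟨ηg, hηg, hg⟩ := exists_sign_mul_inner_eq_abs hg_root hg_li hlat_g hg_indec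
  have hsq {η : Fin n → ℝ} (hη : ∀ k, η k = 1 ∨ η k = -1) k : η k * η k = 1 := by
    rcases hη k with h | h <;> simp [h]
  let ε k := ηf k * ηg k
  have hε k : ε k = 1 ∨ ε k = -1 := by
    rcases hηf k with h | h <;> rcases hηg k with h' | h' <;> simp [ε, h, h']
  have hgram k l : ⟪ε k • g k, ε l • g l⟫ = ⟪f k, f l⟫ := by
    rw [real_inner_smul_left, real_inner_smul_right]
    linear_combination (ηf k * ηf l) * hg k l - (ηf k * ηf l) * habs k l
      - (ηf k * ηf l) * hf k l + (⟪f k, f l⟫ * ηf l * ηf l) * hsq hηf k + ⟪f k, f l⟫ * hsq hηf l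
  have hεg k : ε k • g k ∈ integerLattice n := by
    rcases hε k with h | h <;> simp [h, (hg_root k).mem_integerLattice]
  obtain ⟨σ, δ, hδ, hσ⟩ := exists_signed_perm_of_inner_eq hf_li hlat_f hεg hgram
  refine ⟨σ, δ, ε, hδ, hε, fun k i => ?_⟩
  rw [← hσ k i, PiLp.smul_apply, smul_eq_mul, ← mul_assoc, hsq hε k, one_mul]
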